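/- If U ⊆ ℕ is a consistent set, then F(U) is consistent. -/

import Mathlib

/-- Sentences of the augmented language 𝓛. -/
inductive Sent (B : Type) : Type where
  | base : B → Sent B
  | Tr : ℕ → Sent B
  | exT : Sent B
  | allT : Sent B
  | neg : Sent B → Sent B
  | or : Sent B → Sent B → Sent B
  | and : Sent B → Sent B → Sent B
  | imp : Sent B → Sent B → Sent B
  | iff : Sent B → Sent B → Sent B

variable {B : Type}

mutual
/-- `isTrue gn v U A` means `#A ∈ G(U)` according to rules (r1)–(r9). -/
def isTrue (gn : Sent B → ℕ) (v : B → Bool) (U : Set ℕ) : Sent B → Prop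
  | .base b => v b = true
  | .Tr n => ∃ A : Sent B, n = gn A ∧ gn A ∈ U
  | .exT => ∃ n : ℕ, ∃ A : Sent B, n = gn A ∧ gn A ∈ U
  | .allT => ∀ n : ℕ, ∃ A : Sent B, n = gn A ∧ gn A ∈ U
  | .neg A => isFalse gn v U A
  | .or A C => isTrue gn v U A ∨ isTrue gn v U C
  | .and A C => isTrue gn v U A ∧ isTrue gn v U C
  | .imp A C => isFalse gn v U A ∨ isTrue gn v U C
  | .iff A C => (isTrue gn v U A ∧ isTrue gn v U C) ∨ (isFalse gn v U A ∧ isFalse gn v U C)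

/-- `isFalse gn v U A` means `#A ∈ F(U)` according to rules (r1)–(r9). -/
def isFalse (gn : Sent B → ℕ) (v : B → Bool) (U : Set ℕ) : Sent B → Prop
  | .base b => v b = false
  | .Tr n => ∃ A : Sent B, n = gn A ∧ gn (.neg A) ∈ U
  | .exT => ∀ n : ℕ, ∃ A : Sent B, n = gn A ∧ gn (.neg A) ∈ U
  | .allT => ∃ n : ℕ, ∃ A : Sent B, n = gn A ∧ gn (.neg A) ∈ U
  | .neg A => isTrue gn v U A
  | .or A C => isFalse gn v U A ∧ isFalse gn v U C
  | .and A C => isFalse gn v U A ∨ isFalse gn v U C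
  | .imp A C => isTrue gn v U A ∧ isFalse gn v U C
  | .iff A C => (isTrue gn v U A ∧ isFalse gn v U C) ∨ (isFalse gn v U A ∧ isTrue gn v U C)
end

/-- `G U`: Gödel numbers of sentences declared true over `U`. -/
def GSet (gn : Sent B → ℕ) (v : B → Bool) (U : Set ℕ) : Set ℕ :=
  { n | ∃ A : Sent B, n = gn A ∧ isTrue gn v U A }

/-- `F U`: Gödel numbers of sentences declared false over `U`. -/
def FSet (gn : Sent B → ℕ) (v : B → Bool) (U : Set ℕ) : Set ℕ :=
  { n | ∃ A : Sent B, n = gn A ∧ isFalse gn v U A }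

/-- `U` is consistent: no sentence has both itself and its negation in `U`. -/
def Consistent (gn : Sent B → ℕ) (U : Set ℕ) : Prop :=
  ¬ ∃ A : Sent B, gn A ∈ U ∧ gn (.neg A) ∈ U

/-! Over a consistent `U` no sentence is both true and false: by induction on sentences, the
cases `Tr n`, `exT`, `allT` reduce to the consistency of `U` itself. Since `#(neg A) ∈ F(U)` means
`#A ∈ G(U)`, a clash `#A, #(neg A) ∈ F(U)` would make `A` both true and false. -/

section
variable {gn : Sent B → ℕ} {U : Set ℕ}

theorem Consistent.not_isTrue_and_isFalse (hU : Consistent gn U) (hgn : Function.Injective gn)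
    (v : B → Bool) (A : Sent B) : ¬ (isTrue gn v U A ∧ isFalse gn v U A) := by
  induction A with
  | base b => simp [_root_.isTrue, _root_.isFalse]
  | Tr n =>
    rintro ⟨⟨A, rfl, hA⟩, ⟨A', h, hA'⟩⟩
    exact hU ⟨A, hA, hgn h ▸ hA'⟩
  | exT =>
    rintro ⟨⟨n, A, rfl, hA⟩, hf⟩
    obtain ⟨A', h, hA'⟩ := hf (gn A)
    exact hU ⟨A, hA, hgn h ▸ hA'⟩
  | allT =>
    rintro ⟨ht, ⟨n, A', rfl, hA'⟩⟩
    obtain ⟨A, h, hA⟩ := ht (gn A')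
    exact hU ⟨A, hA, hgn h.symm ▸ hA'⟩
  | neg A ih => exact fun ⟨ht, hf⟩ => ih ⟨hf, ht⟩
  | or A C ihA ihC =>
    rintro ⟨hA | hC, hfA, hfC⟩
    exacts [ihA ⟨hA, hfA⟩, ihC ⟨hC, hfC⟩]
  | and A C ihA ihC =>
    rintro ⟨⟨htA, htC⟩, hA | hC⟩
    exacts [ihA ⟨htA, hA⟩, ihC ⟨htC, hC⟩]
  | imp A C ihA ihC =>
    rintro ⟨hA | hC, htA, hfC⟩
    exacts [ihA ⟨htA, hA⟩, ihC ⟨hC, hfC⟩]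
  | iff A C ihA ihC =>
    rintro ⟨⟨htA, htC⟩ | ⟨hfA, hfC⟩, ⟨h₁, h₂⟩ | ⟨h₁, h₂⟩⟩
    exacts [ihC ⟨htC, h₂⟩, ihA ⟨htA, h₁⟩, ihA ⟨h₁, hfA⟩, ihC ⟨h₂, hfC⟩]

theorem gn_mem_FSet_iff (hgn : Function.Injective gn) (v : B → Bool) (A : Sent B) :
    gn A ∈ FSet gn v U ↔ isFalse gn v U A := by
  constructor
  · rintro ⟨A', h, hA'⟩
    rwa [hgn h]
  · exact fun hA => ⟨A, rfl, hA⟩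

end

/-- If `U ⊆ ℕ` is consistent, then `F(U)` is consistent. -/
theorem stmt_1 {B : Type} (gn : Sent B → ℕ) (hgn : Function.Injective gn)
    (v : B → Bool) (U : Set ℕ) (hU : Consistent gn U) :
    Consistent gn (FSet gn v U) := by
  rintro ⟨A, hA, hnegA⟩
  rw [gn_mem_FSet_iff hgn] at hA hnegA
  exact hU.not_isTrue_and_isFalse hgn v A ⟨hnegA, hA⟩
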